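/- arXiv:1511.01031 — 4 statements merged into one kernel-verified Lean document; each statement's English description precedes it below -/
import Mathlib

section
/- Let A be a congruence-distributive algebra and θ ∈ Con(A). Then for every factor congruence ψ ∈ FC(A), the congruence (ψ ∨ θ)/θ of the quotient algebra A/θ is a factor congruence of A/θ; that is, u_θ(FC(A)) ⊆ FC(A/θ), where u_θ : Con(A) → Con(A/θ) is defined by u_θ(α) = (α ∨ θ)/θ. -/
/-! Universal-algebra framework: algebras over a signature, congruences,
factor congruences, lifting properties. -/

structure Signature where
  ops : Type
  arity : ops → ℕ

structure Alg (σ : Signature) where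
  carrier : Type
  interp : ∀ f : σ.ops, (Fin (σ.arity f) → carrier) → carrier

namespace Alg

variable {σ : Signature}

/-- A congruence: an equivalence relation compatible with all operations. -/
def IsCon (A : Alg σ) (r : A.carrier → A.carrier → Prop) : Prop :=
  Equivalence r ∧
    ∀ (f : σ.ops) (x y : Fin (σ.arity f) → A.carrier),
      (∀ i, r (x i) (y i)) → r (A.interp f x) (A.interp f y)

/-- The least congruence `Δ_A`. -/
def delta (A : Alg σ) : A.carrier → A.carrier → Prop := fun a b => a = b

/-- The greatest congruence `∇_A = A²`. -/
def nabla (A : Alg σ) : A.carrier → A.carrier → Prop := fun _ _ => True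

/-- Meet (intersection) of congruences. -/
def conMeet (A : Alg σ) (r s : A.carrier → A.carrier → Prop) :
    A.carrier → A.carrier → Prop := fun a b => r a b ∧ s a b

/-- Join of congruences: the least congruence containing both. -/
def conJoin (A : Alg σ) (r s : A.carrier → A.carrier → Prop) :
    A.carrier → A.carrier → Prop := fun a b =>
  ∀ t, A.IsCon t → (∀ x y, r x y → t x y) → (∀ x y, s x y → t x y) → t a b

/-- The congruence generated by a set of pairs. -/
def conGen (A : Alg σ) (X : Set (A.carrier × A.carrier)) :
    A.carrier → A.carrier → Prop := fun a b =>
  ∀ t, A.IsCon t → (∀ p ∈ X, t p.1 p.2) → t a b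

/-- Composition of relations: `(a,b) ∈ comp r s` iff `(a,x) ∈ s` and `(x,b) ∈ r`
for some `x`. -/
def comp (A : Alg σ) (r s : A.carrier → A.carrier → Prop) :
    A.carrier → A.carrier → Prop := fun a b => ∃ x, s a x ∧ r x b

/-- Factor congruences: congruences `φ` having a congruence `φ*` with
`φ ∨ φ* = ∇`, `φ ∩ φ* = Δ` and `φ ∘ φ* = φ* ∘ φ`. -/
def IsFC (A : Alg σ) (φ : A.carrier → A.carrier → Prop) : Prop :=
  A.IsCon φ ∧ ∃ ψ, A.IsCon ψ ∧ A.conJoin φ ψ = A.nabla ∧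
    A.conMeet φ ψ = A.delta ∧ A.comp φ ψ = A.comp ψ φ

/-- Boolean congruences: complemented elements of the lattice `Con(A)`. -/
def IsBooleanCon (A : Alg σ) (φ : A.carrier → A.carrier → Prop) : Prop :=
  A.IsCon φ ∧ ∃ ψ, A.IsCon ψ ∧ A.conJoin φ ψ = A.nabla ∧ A.conMeet φ ψ = A.delta

/-- `A` is congruence-distributive iff the lattice `Con(A)` is distributive. -/
def CongDistrib (A : Alg σ) : Prop :=
  ∀ r s t, A.IsCon r → A.IsCon s → A.IsCon t →
    A.conMeet r (A.conJoin s t) = A.conJoin (A.conMeet r s) (A.conMeet r t)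

/-- `A` is congruence-permutable iff all congruences permute under composition. -/
def CongPermutable (A : Alg σ) : Prop :=
  ∀ r s, A.IsCon r → A.IsCon s → A.comp r s = A.comp s r

/-- Arithmetical = congruence-distributive + congruence-permutable. -/
def Arithmetical (A : Alg σ) : Prop := A.CongDistrib ∧ A.CongPermutable

/-- The quotient algebra `A/θ`. -/
noncomputable def quotAlg (A : Alg σ) (θ : A.carrier → A.carrier → Prop) :
    Alg σ where
  carrier := Quot θ
  interp f x := Quot.mk θ (A.interp f fun i => (x i).out)

/-- The image `α/θ = {(a/θ, b/θ) : (a,b) ∈ α}` of a relation in the quotient. -/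
def quotRel (A : Alg σ) (θ α : A.carrier → A.carrier → Prop) :
    Quot θ → Quot θ → Prop := fun x y =>
  ∃ a b, x = Quot.mk θ a ∧ y = Quot.mk θ b ∧ α a b

/-- `θ` has the Factor Congruence Lifting Property: the Boolean morphism
`FC(θ) : FC(A) → FC(A/θ)`, `ψ ↦ (ψ ∨ θ)/θ`, is surjective. -/
def HasFCLP (A : Alg σ) (θ : A.carrier → A.carrier → Prop) : Prop :=
  ∀ γ, (A.quotAlg θ).IsFC γ →
    ∃ ψ, A.IsFC ψ ∧ A.quotRel θ (A.conJoin ψ θ) = γ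

/-- `θ` has the Congruence Boolean Lifting Property: the Boolean morphism
`B(Con(A)) → B(Con(A/θ))`, `ψ ↦ (ψ ∨ θ)/θ`, is surjective. -/
def HasCBLP (A : Alg σ) (θ : A.carrier → A.carrier → Prop) : Prop :=
  ∀ γ, (A.quotAlg θ).IsBooleanCon γ →
    ∃ ψ, A.IsBooleanCon ψ ∧ A.quotRel θ (A.conJoin ψ θ) = γ

/-- `A` has FCLP iff every congruence of `A` has FCLP. -/
def AlgFCLP (A : Alg σ) : Prop := ∀ θ, A.IsCon θ → A.HasFCLP θ

/-- `A` has CBLP iff every congruence of `A` has CBLP. -/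
def AlgCBLP (A : Alg σ) : Prop := ∀ θ, A.IsCon θ → A.HasCBLP θ

/-- FC-normality. -/
def FCNormal (A : Alg σ) : Prop :=
  ∀ φ ψ, A.IsCon φ → A.IsCon ψ → A.comp φ ψ = A.nabla →
    ∃ α β, A.IsFC α ∧ A.IsFC β ∧ A.conMeet α β = A.delta ∧
      A.comp φ α = A.nabla ∧ A.comp ψ β = A.nabla

/-- B-normality. -/
def BNormal (A : Alg σ) : Prop :=
  ∀ φ ψ, A.IsCon φ → A.IsCon ψ → A.conJoin φ ψ = A.nabla →
    ∃ α β, A.IsBooleanCon α ∧ A.IsBooleanCon β ∧ A.conMeet α β = A.delta ∧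
      A.conJoin φ α = A.nabla ∧ A.conJoin ψ β = A.nabla

/-- Isomorphism of algebras. -/
def Iso (A B : Alg σ) : Prop :=
  ∃ e : A.carrier ≃ B.carrier,
    ∀ (f : σ.ops) (x : Fin (σ.arity f) → A.carrier),
      e (A.interp f x) = B.interp f fun i => e (x i)

/-- Direct product of a finite family of algebras. -/
def prodAlg {n : ℕ} (B : Fin n → Alg σ) : Alg σ where
  carrier := ∀ i, (B i).carrier
  interp f x := fun i => (B i).interp f fun j => x j i

/-- The product congruence `θ₁ × … × θₙ`. -/
def prodRel {n : ℕ} (B : Fin n → Alg σ)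
    (θ : ∀ i, (B i).carrier → (B i).carrier → Prop) :
    (prodAlg B).carrier → (prodAlg B).carrier → Prop :=
  fun x y => ∀ i, θ i (x i) (y i)

/-- Maximal congruences: maximal elements of `(Con(A) \ {∇}, ⊆)`. -/
def IsMaxCon (A : Alg σ) (θ : A.carrier → A.carrier → Prop) : Prop :=
  A.IsCon θ ∧ θ ≠ A.nabla ∧
    ∀ ψ, A.IsCon ψ → ψ ≠ A.nabla → (∀ a b, θ a b → ψ a b) → ψ = θ

/-- Prime congruences. -/
def IsPrimeCon (A : Alg σ) (θ : A.carrier → A.carrier → Prop) : Prop :=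
  A.IsCon θ ∧ ∀ α β, A.IsCon α → A.IsCon β →
    (∀ a b, α a b → β a b → θ a b) →
    (∀ a b, α a b → θ a b) ∨ ∀ a b, β a b → θ a b

end Alg

/-! Write `ψ*` for the complement of the factor congruence `ψ`. Since `ψ` and `ψ*` permute,
`ψ ∘ ψ* = ψ ∨ ψ* = ∇`, and this survives enlarging both sides and passing to `A/θ`, so the
images of `ψ ∨ θ` and `ψ* ∨ θ` in `A/θ` permute and compose to `∇`. Distributivity gives
`(ψ ∨ θ) ∩ (ψ* ∨ θ) = (ψ ∩ ψ*) ∨ θ = θ`, so these images meet in `Δ`. -/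

namespace Alg

variable {σ : Signature} {A : Alg σ}

theorem eq_nabla_iff {r : A.carrier → A.carrier → Prop} : r = A.nabla ↔ ∀ a b, r a b :=
  ⟨fun h _ _ => h ▸ trivial,
    fun h => funext fun a => funext fun b => propext (iff_of_true (h a b) trivial)⟩

theorem isCon_conJoin (r s : A.carrier → A.carrier → Prop) : A.IsCon (A.conJoin r s) :=
  ⟨⟨fun a _ ht _ _ => ht.1.refl a,
    fun h t ht hr hs => ht.1.symm (h t ht hr hs),
    fun h₁ h₂ t ht hr hs => ht.1.trans (h₁ t ht hr hs) (h₂ t ht hr hs)⟩,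
   fun _ _ _ h t ht hr hs => ht.2 _ _ _ fun i => h i t ht hr hs⟩

theorem le_conJoin_left (r s : A.carrier → A.carrier → Prop) : r ≤ A.conJoin r s :=
  fun a b h _ _ hr _ => hr a b h

theorem le_conJoin_right (r s : A.carrier → A.carrier → Prop) : s ≤ A.conJoin r s :=
  fun a b h _ _ _ hs => hs a b h

theorem conJoin_le {r s t : A.carrier → A.carrier → Prop} (ht : A.IsCon t) (hr : r ≤ t)
    (hs : s ≤ t) : A.conJoin r s ≤ t :=
  fun _ _ h => h t ht hr hs

theorem comp_le_conJoin (r s : A.carrier → A.carrier → Prop) : A.comp r s ≤ A.conJoin r s :=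
  fun _ _ ⟨_, hs, hr⟩ _ ht htr hts => ht.1.trans (hts _ _ hs) (htr _ _ hr)

theorem conJoin_eq_nabla_of_comp_eq_nabla {r s : A.carrier → A.carrier → Prop}
    (h : A.comp r s = A.nabla) : A.conJoin r s = A.nabla :=
  eq_nabla_iff.2 fun a b => comp_le_conJoin r s a b (eq_nabla_iff.1 h a b)

theorem comp_eq_nabla_of_le {r s r' s' : A.carrier → A.carrier → Prop}
    (h : A.comp r s = A.nabla) (hr : r ≤ r') (hs : s ≤ s') : A.comp r' s' = A.nabla :=
  eq_nabla_iff.2 fun a b =>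
    let ⟨c, hac, hcb⟩ := eq_nabla_iff.1 h a b
    ⟨c, hs a c hac, hr c b hcb⟩

theorem isCon_comp_of_comm {r s : A.carrier → A.carrier → Prop} (hr : A.IsCon r)
    (hs : A.IsCon s) (hcomm : A.comp r s = A.comp s r) : A.IsCon (A.comp r s) := by
  refine ⟨⟨fun a => ⟨a, hs.1.refl a, hr.1.refl a⟩, ?_, ?_⟩, ?_⟩
  · rintro a b ⟨c, hac, hcb⟩
    rw [hcomm]
    exact ⟨c, hr.1.symm hcb, hs.1.symm hac⟩
  · rintro a b d ⟨c, hac, hcb⟩ ⟨e, hbe, hed⟩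
    obtain ⟨x, hcx, hxe⟩ : A.comp r s c e := hcomm ▸ ⟨b, hcb, hbe⟩
    exact ⟨x, hs.1.trans hac hcx, hr.1.trans hxe hed⟩
  · intro f x y h
    choose z hxz hzy using h
    exact ⟨A.interp f z, hs.2 f x z hxz, hr.2 f z y hzy⟩

theorem comp_eq_nabla_of_comm {r s : A.carrier → A.carrier → Prop} (hr : A.IsCon r)
    (hs : A.IsCon s) (hcomm : A.comp r s = A.comp s r) (hjoin : A.conJoin r s = A.nabla) :
    A.comp r s = A.nabla :=
  eq_nabla_iff.2 fun a b =>
    conJoin_le (isCon_comp_of_comm hr hs hcomm) (fun c _ h => ⟨c, hs.1.refl c, h⟩)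
      (fun _ d h => ⟨d, h, hr.1.refl d⟩) a b (hjoin ▸ trivial)

theorem CongDistrib.conMeet_conJoin_le {r s θ : A.carrier → A.carrier → Prop}
    (hcd : A.CongDistrib) (hr : A.IsCon r) (hs : A.IsCon s) (hθ : A.IsCon θ)
    (h : A.conMeet r s ≤ θ) : A.conMeet r (A.conJoin s θ) ≤ θ := by
  rw [hcd r s θ hr hs hθ]
  exact conJoin_le hθ h fun _ _ hab => hab.2

theorem CongDistrib.conMeet_conJoin_conJoin_le {r s θ : A.carrier → A.carrier → Prop}
    (hcd : A.CongDistrib) (hr : A.IsCon r) (hs : A.IsCon s) (hθ : A.IsCon θ)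
    (h : A.conMeet r s ≤ θ) : A.conMeet (A.conJoin r θ) (A.conJoin s θ) ≤ θ := by
  have hrs : A.conMeet r (A.conJoin s θ) ≤ θ := hcd.conMeet_conJoin_le hr hs hθ h
  exact fun a b hab =>
    hcd.conMeet_conJoin_le (isCon_conJoin s θ) hr hθ (fun c d hdc => hrs c d hdc.symm) a b
      hab.symm

section Quotient

variable {θ α β : A.carrier → A.carrier → Prop}

theorem quotRel_mk_mk_iff (hθ : A.IsCon θ) (hα : A.IsCon α) (hθα : θ ≤ α) (a b : A.carrier) :
    A.quotRel θ α (Quot.mk θ a) (Quot.mk θ b) ↔ α a b := by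
  refine ⟨?_, fun h => ⟨a, b, rfl, rfl, h⟩⟩
  rintro ⟨a', b', ha, hb, h⟩
  have haa' := hθα _ _ ((hθ.1.quot_mk_eq_iff a a').1 ha)
  have hb'b := hθα _ _ ((hθ.1.quot_mk_eq_iff b' b).1 hb.symm)
  exact hα.1.trans haa' (hα.1.trans h hb'b)

theorem isCon_quotRel (hθ : A.IsCon θ) (hα : A.IsCon α) (hθα : θ ≤ α) :
    (A.quotAlg θ).IsCon (A.quotRel θ α) := by
  have hmk := quotRel_mk_mk_iff hθ hα hθα
  refine ⟨⟨fun x => ?_, fun {x y} => ?_, fun {x y z} => ?_⟩, fun f x y h => ?_⟩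
  · induction x using Quot.ind with
    | mk a => exact (hmk a a).2 (hα.1.refl a)
  · induction x using Quot.ind; induction y using Quot.ind
    simpa only [hmk] using hα.1.symm
  · induction x using Quot.ind; induction y using Quot.ind; induction z using Quot.ind
    simpa only [hmk] using hα.1.trans
  · refine (hmk _ _).2 (hα.2 f _ _ fun i => (hmk _ _).1 ?_)
    rw [Quot.out_eq (x i), Quot.out_eq (y i)]
    exact h i

theorem quotRel_conMeet_eq_delta (hθ : A.IsCon θ) (hα : A.IsCon α) (hβ : A.IsCon β)
    (hθα : θ ≤ α) (hθβ : θ ≤ β) (h : A.conMeet α β ≤ θ) :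
    (A.quotAlg θ).conMeet (A.quotRel θ α) (A.quotRel θ β) = (A.quotAlg θ).delta := by
  funext x y
  induction x using Quot.ind with | mk a => ?_
  induction y using Quot.ind with | mk b => ?_
  refine propext ⟨fun hab => Quot.sound (h a b ?_), fun hab => hab ▸ ?_⟩
  · exact ⟨(quotRel_mk_mk_iff hθ hα hθα a b).1 hab.1,
      (quotRel_mk_mk_iff hθ hβ hθβ a b).1 hab.2⟩
  · exact ⟨(quotRel_mk_mk_iff hθ hα hθα a a).2 (hα.1.refl a),
      (quotRel_mk_mk_iff hθ hβ hθβ a a).2 (hβ.1.refl a)⟩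

theorem quotRel_comp_eq_nabla (h : A.comp α β = A.nabla) :
    (A.quotAlg θ).comp (A.quotRel θ α) (A.quotRel θ β) = (A.quotAlg θ).nabla := by
  refine eq_nabla_iff.2 fun x y => ?_
  induction x using Quot.ind with | mk a => ?_
  induction y using Quot.ind with | mk b => ?_
  obtain ⟨c, hac, hcb⟩ := eq_nabla_iff.1 h a b
  exact ⟨Quot.mk θ c, ⟨a, c, rfl, rfl, hac⟩, ⟨c, b, rfl, rfl, hcb⟩⟩

end Quotient

end Alg

open Alg

theorem stmt_1_general {σ : Signature} (A : Alg σ)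
    (hcd : A.CongDistrib) (θ : A.carrier → A.carrier → Prop)
    (hθ : A.IsCon θ) :
    ∀ ψ, A.IsFC ψ → (A.quotAlg θ).IsFC (A.quotRel θ (A.conJoin ψ θ)) := by
  rintro ψ ⟨hψ, ψ', hψ', hjoin, hmeet, hcomm⟩
  have hcomp : A.comp ψ ψ' = A.nabla := comp_eq_nabla_of_comm hψ hψ' hcomm hjoin
  have hγγ' := quotRel_comp_eq_nabla (θ := θ)
    (comp_eq_nabla_of_le hcomp (le_conJoin_left ψ θ) (le_conJoin_left ψ' θ))
  have hγ'γ := quotRel_comp_eq_nabla (θ := θ)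
    (comp_eq_nabla_of_le (hcomm ▸ hcomp) (le_conJoin_left ψ' θ) (le_conJoin_left ψ θ))
  have hmeet' : A.conMeet (A.conJoin ψ θ) (A.conJoin ψ' θ) ≤ θ :=
    hcd.conMeet_conJoin_conJoin_le hψ hψ' hθ fun a b hab => by
      rw [hmeet] at hab
      exact hab ▸ hθ.1.refl a
  have hβ := isCon_conJoin ψ θ
  have hβ' := isCon_conJoin ψ' θ
  have hθβ := le_conJoin_right ψ θ
  have hθβ' := le_conJoin_right ψ' θ
  exact ⟨isCon_quotRel hθ hβ hθβ, A.quotRel θ (A.conJoin ψ' θ), isCon_quotRel hθ hβ' hθβ',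
    conJoin_eq_nabla_of_comp_eq_nabla hγγ', quotRel_conMeet_eq_delta hθ hβ hβ' hθβ hθβ' hmeet',
    hγγ'.trans hγ'γ.symm⟩

/-- `u_θ(FC(A)) ⊆ FC(A/θ)`: for every factor congruence `ψ` of `A`,
`(ψ ∨ θ)/θ` is a factor congruence of `A/θ`. -/
theorem stmt_1 {σ : Signature} (A : Alg σ) (hne : Nonempty A.carrier)
    (hcd : A.CongDistrib) (θ : A.carrier → A.carrier → Prop)
    (hθ : A.IsCon θ) :
    ∀ ψ, A.IsFC ψ → (A.quotAlg θ).IsFC (A.quotRel θ (A.conJoin ψ θ)) :=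
  stmt_1_general A hcd θ hθ
end

section
/- Let A be an arithmetical algebra. Then: (1) for every θ ∈ Con(A), θ has the FCLP if and only if θ has the CBLP; (2) A has the FCLP if and only if A has the CBLP. -/
namespace Alg

variable {σ : Signature}

theorem aux_key (A : Alg σ) (θ : A.carrier → A.carrier → Prop) (hθ : A.IsCon θ)
    (f : σ.ops) (x : Fin (σ.arity f) → A.carrier) :
    Quot.mk θ (A.interp f x) = (A.quotAlg θ).interp f (fun i => Quot.mk θ (x i)) := by
  show Quot.mk θ (A.interp f x) = Quot.mk θ (A.interp f fun i => (Quot.mk θ (x i)).out)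
  apply Quot.sound
  apply hθ.2 f
  intro i
  have h : Quot.mk θ ((Quot.mk θ (x i)).out) = Quot.mk θ (x i) := Quot.out_eq _
  exact hθ.1.symm (hθ.1.eqvGen_iff.mp (Quot.eq.mp h))

theorem aux_pullback (A : Alg σ) (θ : A.carrier → A.carrier → Prop) (hθ : A.IsCon θ)
    (r' : Quot θ → Quot θ → Prop) (hr' : (A.quotAlg θ).IsCon r') :
    A.IsCon (fun a b => r' (Quot.mk θ a) (Quot.mk θ b)) := by
  constructor
  · exact ⟨fun a => hr'.1.refl _, fun h => hr'.1.symm h, fun h1 h2 => hr'.1.trans h1 h2⟩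
  · intro f x y h
    have := hr'.2 f (fun i => Quot.mk θ (x i)) (fun i => Quot.mk θ (y i)) h
    show r' (Quot.mk θ (A.interp f x)) (Quot.mk θ (A.interp f y))
    rw [aux_key A θ hθ, aux_key A θ hθ]
    exact this

theorem aux_quotPerm (A : Alg σ) (θ : A.carrier → A.carrier → Prop) (hθ : A.IsCon θ)
    (hp : A.CongPermutable) : (A.quotAlg θ).CongPermutable := by
  intro r' s' hr' hs'
  have hr := aux_pullback A θ hθ r' hr'
  have hs := aux_pullback A θ hθ s' hs'
  have h := hp _ _ hr hs
  funext a b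
  induction a using Quot.ind with | _ a₀ =>
  induction b using Quot.ind with | _ b₀ =>
  apply propext
  constructor
  · rintro ⟨x, hsx, hrx⟩
    induction x using Quot.ind with | _ x₀ =>
    have : A.comp (fun a b => r' (Quot.mk θ a) (Quot.mk θ b))
        (fun a b => s' (Quot.mk θ a) (Quot.mk θ b)) a₀ b₀ := ⟨x₀, hsx, hrx⟩
    rw [h] at this
    obtain ⟨y, hy1, hy2⟩ := this
    exact ⟨Quot.mk θ y, hy1, hy2⟩
  · rintro ⟨x, hsx, hrx⟩
    induction x using Quot.ind with | _ x₀ =>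
    have : A.comp (fun a b => s' (Quot.mk θ a) (Quot.mk θ b))
        (fun a b => r' (Quot.mk θ a) (Quot.mk θ b)) a₀ b₀ := ⟨x₀, hsx, hrx⟩
    rw [← h] at this
    obtain ⟨y, hy1, hy2⟩ := this
    exact ⟨Quot.mk θ y, hy1, hy2⟩

theorem aux_fc_iff (B : Alg σ) (hp : B.CongPermutable) (φ : B.carrier → B.carrier → Prop) :
    B.IsFC φ ↔ B.IsBooleanCon φ := by
  constructor
  · rintro ⟨h1, ψ, h2, h3, h4, _⟩
    exact ⟨h1, ψ, h2, h3, h4⟩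
  · rintro ⟨h1, ψ, h2, h3, h4⟩
    exact ⟨h1, ψ, h2, h3, h4, hp _ _ h1 h2⟩

end Alg

/-- In an arithmetical algebra, FCLP and CBLP coincide, both for individual
congruences and for the algebra itself. -/
theorem stmt_6 {σ : Signature} (A : Alg σ) (hne : Nonempty A.carrier)
    (ha : A.Arithmetical) :
    (∀ θ, A.IsCon θ → (A.HasFCLP θ ↔ A.HasCBLP θ)) ∧
    (A.AlgFCLP ↔ A.AlgCBLP) := by
  have hp := ha.2
  have key : ∀ θ, A.IsCon θ → (A.HasFCLP θ ↔ A.HasCBLP θ) := by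
    intro θ hθ
    have hq := Alg.aux_quotPerm A θ hθ hp
    constructor
    · intro h γ hγ
      obtain ⟨ψ, hψ, he⟩ := h γ ((Alg.aux_fc_iff _ hq γ).mpr hγ)
      exact ⟨ψ, (Alg.aux_fc_iff A hp ψ).mp hψ, he⟩
    · intro h γ hγ
      obtain ⟨ψ, hψ, he⟩ := h γ ((Alg.aux_fc_iff _ hq γ).mp hγ)
      exact ⟨ψ, (Alg.aux_fc_iff A hp ψ).mpr hψ, he⟩
  refine ⟨key, ?_, ?_⟩
  · intro h θ hθ; exact (key θ hθ).mp (h θ hθ)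
  · intro h θ hθ; exact (key θ hθ).mpr (h θ hθ)
end

section
/- Every Boolean algebra has the FCLP, i.e., for every Boolean algebra B and every congruence θ of B, the Boolean morphism FC(θ) : FC(B) → FC(B/θ), φ ↦ (φ ∨ θ)/θ, is surjective. -/
/-! The signature of Boolean algebras. -/

inductive BoolOp | sup | inf | compl | bot | top

abbrev boolSig : Signature where
  ops := BoolOp
  arity := fun f => match f with
    | .sup => 2 | .inf => 2 | .compl => 1 | .bot => 0 | .top => 0

/-- The algebra over `boolSig` attached to a Boolean algebra. -/
def boolAlg (B : Type) [BooleanAlgebra B] : Alg boolSig where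
  carrier := B
  interp := fun f => match f with
    | .sup => fun x => x 0 ⊔ x 1
    | .inf => fun x => x 0 ⊓ x 1
    | .compl => fun x => (x 0)ᶜ
    | .bot => fun _ => ⊥
    | .top => fun _ => ⊤

/-! A factor congruence `γ` of `B/θ` has a complement `γ'` permuting with it, so `⊥/θ` and
`⊤/θ` are linked through some `c/θ` with `γ' (⊥/θ) (c/θ)` and `γ (c/θ) (⊤/θ)`. Then `γ` relates
`a/θ` and `b/θ` exactly when `θ (a ⊓ c) (b ⊓ c)`. In `B` itself, the kernel of `x ↦ x ⊓ c` is a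
factor congruence (with complement the kernel of `x ↦ x ⊓ cᶜ`), and its join with `θ` is
`{(a, b) | θ (a ⊓ c) (b ⊓ c)}`; hence it lifts `γ`. -/

namespace Alg

variable {σ : Signature} {A : Alg σ}

theorem isCon_delta : A.IsCon A.delta :=
  ⟨⟨fun _ => rfl, Eq.symm, Eq.trans⟩, fun _ _ _ h => congrArg _ (funext h)⟩

theorem comp_le_conJoin_s7 {r s t : A.carrier → A.carrier → Prop} (ht : A.IsCon t)
    (hrt : ∀ a b, r a b → t a b) (hst : ∀ a b, s a b → t a b) {a b : A.carrier}
    (h : A.comp r s a b) : t a b :=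
  let ⟨x, hax, hxb⟩ := h
  ht.1.trans (hst a x hax) (hrt x b hxb)

namespace IsCon

variable {r s θ : A.carrier → A.carrier → Prop}

theorem comp (hr : A.IsCon r) (hs : A.IsCon s) (hrs : A.comp r s = A.comp s r) :
    A.IsCon (A.comp r s) := by
  refine ⟨⟨fun a => ⟨a, hs.1.refl a, hr.1.refl a⟩, ?_, ?_⟩, ?_⟩
  · rintro a b ⟨x, hax, hxb⟩
    rw [hrs]
    exact ⟨x, hr.1.symm hxb, hs.1.symm hax⟩
  · rintro a b c ⟨x, hax, hxb⟩ ⟨y, hby, hyc⟩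
    obtain ⟨z, hxz, hzy⟩ : A.comp r s x y := hrs ▸ ⟨b, hxb, hby⟩
    exact ⟨z, hs.1.trans hax hxz, hr.1.trans hzy hyc⟩
  · intro f x y h
    choose m hxm hmy using h
    exact ⟨A.interp f m, hs.2 f x m hxm, hr.2 f m y hmy⟩

theorem comp_of_conJoin_eq_nabla (hr : A.IsCon r) (hs : A.IsCon s)
    (hrs : A.comp r s = A.comp s r) (hjoin : A.conJoin r s = A.nabla) (a b : A.carrier) :
    A.comp r s a b :=
  (hjoin ▸ trivial : A.conJoin r s a b) _ (hr.comp hs hrs)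
    (fun x _ hxy => ⟨x, hs.1.refl x, hxy⟩) (fun _ y hxy => ⟨y, hxy, hr.1.refl y⟩)

theorem mk_eq_mk_iff (hθ : A.IsCon θ) {a b : A.carrier} :
    Quot.mk θ a = Quot.mk θ b ↔ θ a b :=
  ⟨fun h => hθ.1.eqvGen_iff.mp (Quot.eq.mp h), Quot.sound⟩

theorem interp_mk (hθ : A.IsCon θ) (f : σ.ops) (x : Fin (σ.arity f) → A.carrier) :
    (A.quotAlg θ).interp f (fun i => Quot.mk θ (x i)) = Quot.mk θ (A.interp f x) :=
  Quot.sound <| hθ.2 f _ _ fun _ => hθ.mk_eq_mk_iff.mp (Quot.out_eq _)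

end IsCon

def comapQuot (θ : A.carrier → A.carrier → Prop) (γ : Quot θ → Quot θ → Prop) :
    A.carrier → A.carrier → Prop :=
  fun a b => γ (Quot.mk θ a) (Quot.mk θ b)

variable {θ : A.carrier → A.carrier → Prop} {γ : Quot θ → Quot θ → Prop}

theorem quotRel_comapQuot : A.quotRel θ (comapQuot θ γ) = γ := by
  funext x y
  apply propext
  constructor
  · rintro ⟨a, b, rfl, rfl, h⟩
    exact h
  · intro h
    obtain ⟨a, rfl⟩ := Quot.exists_rep x
    obtain ⟨b, rfl⟩ := Quot.exists_rep y
    exact ⟨a, b, rfl, rfl, h⟩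

theorem IsCon.comapQuot (hθ : A.IsCon θ) (hγ : (A.quotAlg θ).IsCon γ) :
    A.IsCon (comapQuot θ γ) := by
  refine ⟨⟨fun _ => hγ.1.refl _, hγ.1.symm, hγ.1.trans⟩, fun f x y h => ?_⟩
  simpa only [Alg.comapQuot, hθ.interp_mk] using hγ.2 f _ _ h

theorem IsCon.le_comapQuot (hθ : A.IsCon θ) (hγ : (A.quotAlg θ).IsCon γ) {a b : A.carrier}
    (h : θ a b) : Alg.comapQuot θ γ a b := by
  rw [Alg.comapQuot, hθ.mk_eq_mk_iff.mpr h]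
  exact hγ.1.refl _

theorem IsFC.exists_comapQuot (hθ : A.IsCon θ) (hγ : (A.quotAlg θ).IsFC γ) :
    ∃ β, A.IsCon β ∧ (∀ a b, A.comp (comapQuot θ γ) β a b) ∧
      ∀ a b, comapQuot θ γ a b → β a b → θ a b := by
  obtain ⟨hγc, γ', hγ'c, hjoin, hmeet, hperm⟩ := hγ
  refine ⟨comapQuot θ γ', hθ.comapQuot hγ'c, fun a b => ?_, fun a b h h' => ?_⟩
  · obtain ⟨x, hax, hxb⟩ := hγc.comp_of_conJoin_eq_nabla hγ'c hperm hjoin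
      (Quot.mk θ a) (Quot.mk θ b)
    obtain ⟨c, rfl⟩ := Quot.exists_rep x
    exact ⟨c, hax, hxb⟩
  · exact hθ.mk_eq_mk_iff.mp (hmeet ▸ ⟨h, h'⟩ : (A.quotAlg θ).delta _ _)

end Alg

section BooleanAlgebra

variable {B : Type} [BooleanAlgebra B] {θ : B → B → Prop}

theorem exists_inf_eq_and_inf_compl_eq (a b c : B) :
    ∃ x, x ⊓ c = a ⊓ c ∧ x ⊓ cᶜ = b ⊓ cᶜ :=
  ⟨a ⊓ c ⊔ b ⊓ cᶜ, by simp [inf_sup_right, inf_assoc], by simp [inf_sup_right, inf_assoc]⟩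

namespace Alg.IsCon

theorem sup (hθ : (boolAlg B).IsCon θ) {a b a' b' : B} (h : θ a b) (h' : θ a' b') :
    θ (a ⊔ a') (b ⊔ b') :=
  hθ.2 .sup ![a, a'] ![b, b'] (Fin.forall_fin_two.mpr ⟨h, h'⟩)

theorem inf (hθ : (boolAlg B).IsCon θ) {a b a' b' : B} (h : θ a b) (h' : θ a' b') :
    θ (a ⊓ a') (b ⊓ b') :=
  hθ.2 .inf ![a, a'] ![b, b'] (Fin.forall_fin_two.mpr ⟨h, h'⟩)

theorem compl (hθ : (boolAlg B).IsCon θ) {a b : B} (h : θ a b) : θ aᶜ bᶜ :=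
  hθ.2 .compl ![a] ![b] (Fin.forall_fin_one.mpr h)

theorem of_inf_of_inf_compl (hθ : (boolAlg B).IsCon θ) {a b c : B} (h : θ (a ⊓ c) (b ⊓ c))
    (h' : θ (a ⊓ cᶜ) (b ⊓ cᶜ)) : θ a b := by
  simpa only [sup_inf_inf_compl] using hθ.sup h h'

end Alg.IsCon

def comapInf (θ : B → B → Prop) (c : B) : B → B → Prop := fun a b => θ (a ⊓ c) (b ⊓ c)

theorem Alg.IsCon.comapInf (hθ : (boolAlg B).IsCon θ) (c : B) :
    (boolAlg B).IsCon (comapInf θ c : B → B → Prop) := by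
  refine ⟨⟨fun _ => hθ.1.refl _, hθ.1.symm, hθ.1.trans⟩, fun f x y h => ?_⟩
  change Fin _ → B at x y
  cases f with
  | sup =>
    show θ ((x 0 ⊔ x 1) ⊓ c) ((y 0 ⊔ y 1) ⊓ c)
    simpa only [inf_sup_right] using hθ.sup (h 0) (h 1)
  | inf =>
    show θ ((x 0 ⊓ x 1) ⊓ c) ((y 0 ⊓ y 1) ⊓ c)
    simpa only [← inf_inf_distrib_right] using hθ.inf (h 0) (h 1)
  | compl =>
    show θ ((x 0)ᶜ ⊓ c) ((y 0)ᶜ ⊓ c)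
    simpa only [compl_inf, inf_sup_right, compl_inf_self, sup_bot_eq]
      using hθ.inf (hθ.compl (h 0)) (hθ.1.refl c)
  | bot => exact hθ.1.refl _
  | top => exact hθ.1.refl _

theorem comp_comapInf_eq_compl (c a b : B) :
    (boolAlg B).comp (comapInf (· = ·) c : B → B → Prop)
      (comapInf (· = ·) cᶜ : B → B → Prop) a b := by
  obtain ⟨x, hxc, hxc'⟩ := exists_inf_eq_and_inf_compl_eq b a c
  exact ⟨x, hxc'.symm, hxc⟩

theorem isFC_comapInf_eq (c : B) : (boolAlg B).IsFC (comapInf (· = ·) c : B → B → Prop) := by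
  have hker (d : B) := Alg.isCon_delta.comapInf (B := B) d
  refine ⟨hker c, (comapInf (· = ·) cᶜ : B → B → Prop), hker cᶜ, ?_, ?_, ?_⟩
  · funext a b
    exact propext <| iff_of_true (fun t ht hct hc't =>
      Alg.comp_le_conJoin_s7 ht hct hc't (comp_comapInf_eq_compl c a b)) trivial
  · funext a b
    exact propext ⟨fun h => Alg.isCon_delta.of_inf_of_inf_compl h.1 h.2,
      by rintro rfl; exact ⟨rfl, rfl⟩⟩
  · funext a b
    refine propext <| iff_of_true (comp_comapInf_eq_compl c a b) ?_
    simpa only [compl_compl] using comp_comapInf_eq_compl cᶜ a b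

theorem conJoin_comapInf_eq (hθ : (boolAlg B).IsCon θ) (c : B) :
    (boolAlg B).conJoin (comapInf (· = ·) c : B → B → Prop) θ =
      (comapInf θ c : B → B → Prop) := by
  funext (a : B) (b : B)
  refine propext ⟨fun h => h _ (hθ.comapInf c) ?_ ?_, fun h t ht hct hθt => ?_⟩
  · intro (x : B) (y : B) (hxy : x ⊓ c = y ⊓ c)
    show θ (x ⊓ c) (y ⊓ c)
    exact hxy ▸ hθ.1.refl _
  · exact fun x y hxy => hθ.inf hxy (hθ.1.refl c)
  · obtain ⟨x, hxc, hxc'⟩ := exists_inf_eq_and_inf_compl_eq a b c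
    have hxb : θ x b := hθ.of_inf_of_inf_compl (by rw [hxc]; exact h)
      (by rw [hxc']; exact hθ.1.refl _)
    exact ht.1.trans (hct a x hxc.symm) (hθt x b hxb)

theorem exists_eq_comapInf {α β : B → B → Prop} (hα : (boolAlg B).IsCon α)
    (hβ : (boolAlg B).IsCon β)
    (hαβ : ∀ a b, (boolAlg B).comp α β a b) (hmeet : ∀ a b, α a b → β a b → θ a b)
    (hθα : ∀ a b, θ a b → α a b) : ∃ c, α = comapInf θ c := by
  obtain ⟨c, hβc, hαc⟩ := hαβ (⊥ : B) (⊤ : B)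
  have hβ_inf (a : B) : β ⊥ (a ⊓ c) := by simpa using hβ.inf (hβ.1.refl a) hβc
  have hα_inf (a : B) : α (a ⊓ c) a := by simpa using hα.inf (hα.1.refl a) hαc
  refine ⟨c, funext₂ fun a b => propext ⟨fun h => ?_, fun h => ?_⟩⟩
  · exact hmeet _ _ (hα.inf h (hα.1.refl c)) (hβ.1.trans (hβ.1.symm (hβ_inf a)) (hβ_inf b))
  · exact hα.1.trans (hα.1.symm (hα_inf a)) (hα.1.trans (hθα _ _ h) (hα_inf b))

end BooleanAlgebra

/-- Every Boolean algebra has the FCLP: for every congruence `θ` of a Boolean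
algebra `B`, the Boolean morphism `FC(θ) : FC(B) → FC(B/θ)` is surjective. -/
theorem stmt_7 (B : Type) [BooleanAlgebra B] (θ : B → B → Prop)
    (hθ : (boolAlg B).IsCon θ) : (boolAlg B).HasFCLP θ := by
  intro γ hγ
  obtain ⟨β, hβ, hcomp, hmeet⟩ := hγ.exists_comapQuot hθ
  obtain ⟨c, hc⟩ := exists_eq_comapInf (hθ.comapQuot hγ.1) hβ hcomp hmeet
    fun _ _ => hθ.le_comapQuot hγ.1
  refine ⟨_, isFC_comapInf_eq c, ?_⟩
  rw [conJoin_comapInf_eq hθ, ← hc]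
  exact Alg.quotRel_comapQuot
end

section
/- Let A be a congruence-distributive algebra. Then A is FC-normal if and only if for all φ, ψ ∈ Con(A) with φ∘ψ = ∇_A there exists α ∈ FC(A) such that φ ∨ α = ψ ∨ ¬α = ∇_A, where ¬α denotes the complement of α in the Boolean algebra FC(A). -/
section Aux

variable {σ : Signature} (A : Alg σ)

lemma aux_conMeet_comm (r s : A.carrier → A.carrier → Prop) :
    A.conMeet r s = A.conMeet s r :=
  funext fun _ => funext fun _ => propext And.comm

lemma aux_conJoin_comm (r s : A.carrier → A.carrier → Prop) :
    A.conJoin r s = A.conJoin s r :=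
  funext fun _ => funext fun _ => propext
    ⟨fun h t ht h1 h2 => h t ht h2 h1, fun h t ht h1 h2 => h t ht h2 h1⟩

/-- If `α ∩ β = Δ` and `β ∨ γ = ∇` then `α ⊆ γ` (uses distributivity). -/
lemma aux_sub_of (hcd : A.CongDistrib) {α β γ : A.carrier → A.carrier → Prop}
    (hα : A.IsCon α) (hβ : A.IsCon β) (hγ : A.IsCon γ)
    (hmeet : A.conMeet α β = A.delta) (hjoin : A.conJoin β γ = A.nabla) :
    ∀ a b, α a b → γ a b := by
  intro a b hab
  have h1 : A.conMeet α (A.conJoin β γ) a b := ⟨hab, by rw [hjoin]; trivial⟩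
  rw [hcd α β γ hα hβ hγ] at h1
  exact h1 γ hγ
    (fun x y h => by
      have hd : A.delta x y := by rw [← hmeet]; exact h
      exact hd ▸ hγ.1.refl x)
    (fun x y h => h.2)

/-- A complementary permuting pair composes to `∇`. -/
lemma aux_comp_nabla {α β : A.carrier → A.carrier → Prop}
    (hα : A.IsCon α) (hβ : A.IsCon β) (hjoin : A.conJoin α β = A.nabla)
    (hperm : A.comp α β = A.comp β α) : A.comp α β = A.nabla := by
  have hcon : A.IsCon (A.comp α β) := by
    constructor
    · constructor
      · intro a; exact ⟨a, hβ.1.refl a, hα.1.refl a⟩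
      · intro a b hab
        have h2 : A.comp β α a b := by rw [← hperm]; exact hab
        obtain ⟨y, hay, hyb⟩ := h2
        exact ⟨y, hβ.1.symm hyb, hα.1.symm hay⟩
      · intro a b c hab hbc
        obtain ⟨x, hax, hxb⟩ := hab
        obtain ⟨y, hby, hyc⟩ := hbc
        have h3 : A.comp α β x y := by rw [hperm]; exact ⟨b, hxb, hby⟩
        obtain ⟨w, hxw, hwy⟩ := h3
        exact ⟨w, hβ.1.trans hax hxw, hα.1.trans hwy hyc⟩
    · intro f x y h
      choose z hz1 hz2 using h
      exact ⟨A.interp f z, hβ.2 f x z hz1, hα.2 f z y hz2⟩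
  funext a b
  apply propext
  refine ⟨fun _ => trivial, fun _ => ?_⟩
  have hj : A.conJoin α β a b := by rw [hjoin]; trivial
  exact hj _ hcon (fun x y hxy => ⟨x, hβ.1.refl x, hxy⟩)
    (fun x y hxy => ⟨y, hxy, hα.1.refl y⟩)

end Aux

/-- `A` is FC-normal iff for all congruences `φ, ψ` with `φ ∘ ψ = ∇` there is
`α ∈ FC(A)`, with complement `β = ¬α` in the Boolean algebra `FC(A)`, such
that `φ ∨ α = ψ ∨ ¬α = ∇`. -/
theorem stmt_9 {σ : Signature} (A : Alg σ) (hne : Nonempty A.carrier)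
    (hcd : A.CongDistrib) :
    A.FCNormal ↔
      ∀ φ ψ, A.IsCon φ → A.IsCon ψ → A.comp φ ψ = A.nabla →
        ∃ α β, A.IsCon α ∧ A.IsCon β ∧ A.conJoin α β = A.nabla ∧
          A.conMeet α β = A.delta ∧ A.comp α β = A.comp β α ∧
          A.conJoin φ α = A.nabla ∧ A.conJoin ψ β = A.nabla := by
  constructor
  · intro h φ ψ hφ hψ hcomp
    obtain ⟨α, β, hαFC, hβFC, hmeet, hφα, hψβ⟩ := h φ ψ hφ hψ hcomp
    obtain ⟨hβcon, β', hβ'con, hjoin, hmeetβ, hperm⟩ := hβFC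
    have hαcon := hαFC.1
    have hsub : ∀ a b, α a b → β' a b :=
      aux_sub_of A hcd hαcon hβcon hβ'con hmeet hjoin
    refine ⟨β', β, hβ'con, hβcon, ?_, ?_, hperm.symm, ?_, ?_⟩
    · rw [aux_conJoin_comm]; exact hjoin
    · rw [aux_conMeet_comm]; exact hmeetβ
    · funext a b
      apply propext
      refine ⟨fun _ => trivial, fun _ => ?_⟩
      have hc : A.comp φ α a b := by rw [hφα]; trivial
      obtain ⟨x, hax, hxb⟩ := hc
      intro t ht htφ htβ'
      exact ht.1.trans (htβ' _ _ (hsub _ _ hax)) (htφ _ _ hxb)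
    · funext a b
      apply propext
      refine ⟨fun _ => trivial, fun _ => ?_⟩
      have hc : A.comp ψ β a b := by rw [hψβ]; trivial
      obtain ⟨x, hax, hxb⟩ := hc
      intro t ht htψ htβ
      exact ht.1.trans (htβ _ _ hax) (htψ _ _ hxb)
  · intro h φ ψ hφ hψ hcomp
    obtain ⟨α, β, hα, hβ, hjoin, hmeet, hperm, hφα, hψβ⟩ := h φ ψ hφ hψ hcomp
    have hcompαβ : A.comp α β = A.nabla := aux_comp_nabla A hα hβ hjoin hperm
    have hcompβα : A.comp β α = A.nabla := hperm ▸ hcompαβ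
    have hβφ : ∀ a b, β a b → φ a b := by
      refine aux_sub_of A hcd hβ hα hφ ?_ ?_
      · rw [aux_conMeet_comm]; exact hmeet
      · rw [aux_conJoin_comm]; exact hφα
    have hαψ : ∀ a b, α a b → ψ a b := by
      refine aux_sub_of A hcd hα hβ hψ hmeet ?_
      rw [aux_conJoin_comm]; exact hψβ
    refine ⟨α, β, ⟨hα, β, hβ, hjoin, hmeet, hperm⟩,
      ⟨hβ, α, hα, ?_, ?_, hperm.symm⟩, hmeet, ?_, ?_⟩
    · rw [aux_conJoin_comm]; exact hjoin
    · rw [aux_conMeet_comm]; exact hmeet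
    · funext a b
      apply propext
      refine ⟨fun _ => trivial, fun _ => ?_⟩
      have hc : A.comp β α a b := by rw [hcompβα]; trivial
      obtain ⟨x, hax, hxb⟩ := hc
      exact ⟨x, hax, hβφ _ _ hxb⟩
    · funext a b
      apply propext
      refine ⟨fun _ => trivial, fun _ => ?_⟩
      have hc : A.comp α β a b := by rw [hcompαβ]; trivial
      obtain ⟨x, hax, hxb⟩ := hc
      exact ⟨x, hax, hαψ _ _ hxb⟩
end
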